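/- Let K = (G, M, I) be a formal context, m ∈ M, R = G \ m', g ∈ R, L = op^{g,m}(K) with derivation (·)^J, and let S be an R-mixed generator of K. Then: χ(S) = χ(S \ R) if and only if S is not an R-mixed generator of L or S is an R-mixed generator of L with S^J = S' (i.e., S ∈ N ∪ A); and χ(S) ⊊ χ(S \ R) if and only if S is an R-mixed generator of L with S^J ≠ S' (i.e., S ∈ B ∪ C). Moreover, membership in C^R is independent of the choice of g: if R ⊆ S and S is an R-mixed generator of L with S^J ≠ S' and (S ∪ {g})^J ≠ S', then for every h ∈ R the set S is an R-mixed generator of op^{h,m}(K) with S^{J_h} ≠ S' and (S ∪ {h})^{J_h} ≠ S', where (·)^{J_h} denotes derivation in op^{h,m}(K). -/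
import Mathlib


/-- Derivation of a set of objects: the attributes shared by all of them. -/
def intentOf {G M : Type*} (I : G → M → Prop) (S : Set G) : Set M :=
  {n | ∀ g ∈ S, I g n}

/-- Derivation of a set of attributes: the objects having all of them. -/
def extentOf {G M : Type*} (I : G → M → Prop) (B : Set M) : Set G :=
  {g | ∀ n ∈ B, I g n}

/-- Double derivation (closure) of a set of objects. -/
def cl {G M : Type*} (I : G → M → Prop) (S : Set G) : Set G :=
  extentOf I (intentOf I S)

/-- A set of objects is an extent if it is closed under double derivation. -/
def IsExtent {G M : Type*} (I : G → M → Prop) (S : Set G) : Prop :=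
  cl I S = S

/-- The number of concepts of the context equals its number of extents. -/
noncomputable def numConcepts {G M : Type*} (I : G → M → Prop) : ℕ :=
  {S : Set G | IsExtent I S}.ncard

/-- The context op^{g,m}(K): fill the row of `g` except at `m`,
and fill the column of `m` except at `g`. -/
def opRel {G M : Type*} (I : G → M → Prop) (g : G) (m : M) : G → M → Prop :=
  fun h n => I h n ∨ (h = g ∧ n ≠ m) ∨ (h ≠ g ∧ n = m)

/-- `S` is an `R`-mixed generator. -/
def MixGen {G M : Type*} (I : G → M → Prop) (R S : Set G) : Prop :=
  ∀ g : G, (g ∈ S ∩ R → cl I (S \ {g}) ≠ cl I S) ∧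
    (g ∉ S ∪ R → cl I (S ∪ {g}) ≠ cl I S)

/-- `S` strongly avoids `h` (with respect to the attribute `m`):
`S' ∩ (hᶜ \ {m}) ≠ ∅`. -/
def StronglyAvoids {G M : Type*} (I : G → M → Prop) (m : M) (S : Set G) (h : G) : Prop :=
  ∃ n, n ∈ intentOf I S ∧ ¬ I h n ∧ n ≠ m

/-- `χ(S)`: the set of objects of `R = G \ m'` strongly avoided by `S`. -/
def chi {G M : Type*} (I : G → M → Prop) (m : M) (S : Set G) : Set G :=
  {h | ¬ I h m ∧ StronglyAvoids I m S h}

section Aux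

variable {G M : Type*}

lemma intent_anti (I : G → M → Prop) {S T : Set G} (h : S ⊆ T) :
    intentOf I T ⊆ intentOf I S := fun n hn x hx => hn x (h hx)

lemma subset_cl (I : G → M → Prop) (S : Set G) : S ⊆ cl I S :=
  fun x hx n hn => hn x hx

lemma intent_cl (I : G → M → Prop) (S : Set G) :
    intentOf I (cl I S) = intentOf I S := by
  refine subset_antisymm (intent_anti I (subset_cl I S)) ?_
  intro n hn x hx
  exact hx n hn

lemma cl_mono (I : G → M → Prop) {S T : Set G} (h : S ⊆ T) : cl I S ⊆ cl I T :=
  fun x hx n hn => hx n (intent_anti I h hn)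

lemma cl_cl (I : G → M → Prop) (S : Set G) : cl I (cl I S) = cl I S := by
  show extentOf I (intentOf I (cl I S)) = cl I S
  rw [intent_cl]
  rfl

lemma cl_eq_of_subset_cl (I : G → M → Prop) {S T : Set G} (h1 : S ⊆ T)
    (h2 : T ⊆ cl I S) : cl I T = cl I S := by
  refine subset_antisymm ?_ (cl_mono I h1)
  calc cl I T ⊆ cl I (cl I S) := cl_mono I h2
    _ = cl I S := cl_cl I S

lemma mixgen_iff (I : G → M → Prop) (R S : Set G) :
    MixGen I R S ↔ (∀ x ∈ S ∩ R, x ∉ cl I (S \ {x})) ∧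
      (∀ x, x ∉ S ∪ R → x ∉ cl I S) := by
  constructor
  · intro h
    constructor
    · intro x hx hcl
      refine (h x).1 hx ?_
      refine (cl_eq_of_subset_cl I Set.diff_subset ?_).symm
      intro y hy
      by_cases hyx : y = x
      · exact hyx ▸ hcl
      · exact subset_cl I _ ⟨hy, hyx⟩
    · intro x hx hcl
      refine (h x).2 hx ?_
      refine cl_eq_of_subset_cl I Set.subset_union_left ?_
      intro y hy
      rcases hy with hy | hy
      · exact subset_cl I S hy
      · exact hy ▸ hcl
  · rintro ⟨h1, h2⟩ x
    constructor
    · intro hx heq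
      exact h1 x hx (heq ▸ subset_cl I S hx.1)
    · intro hx heq
      exact h2 x hx (heq ▸ subset_cl I (S ∪ {x}) (Or.inr rfl))

/-- Closure ignoring the attribute `m`. -/
def clm (I : G → M → Prop) (m : M) (S : Set G) : Set G :=
  {h | ∀ n ∈ intentOf I S, n ≠ m → I h n}

lemma clm_mono (I : G → M → Prop) (m : M) {S T : Set G} (h : S ⊆ T) :
    clm I m S ⊆ clm I m T := fun x hx n hn hnm => hx n (intent_anti I h hn) hnm

lemma clm_eq_cl (I : G → M → Prop) (m : M) {S : Set G} {x : G} (hx : x ∈ S)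
    (hxm : ¬ I x m) : clm I m S = cl I S := by
  ext h
  constructor
  · intro hh n hn
    by_cases hne : n = m
    · exact absurd (hne ▸ hn x hx) hxm
    · exact hh n hn hne
  · intro hh n hn _
    exact hh n hn

lemma mem_cl_of_mem_clm (I : G → M → Prop) (m : M) {S : Set G} {x : G}
    (hxm : I x m) (hx : x ∈ clm I m S) : x ∈ cl I S := by
  intro n hn
  by_cases hne : n = m
  · exact hne ▸ hxm
  · exact hx n hn hne

lemma intent_op_ne (I : G → M → Prop) {g : G} {m n : M} (hn : n ≠ m) (T : Set G) :
    n ∈ intentOf (opRel I g m) T ↔ n ∈ intentOf I (T \ {g}) := by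
  simp only [intentOf, opRel, Set.mem_setOf_eq, Set.mem_diff, Set.mem_singleton_iff]
  constructor
  · rintro h x ⟨hxT, hxg⟩
    rcases h x hxT with h1 | ⟨rfl, _⟩ | ⟨_, rfl⟩
    · exact h1
    · exact absurd rfl hxg
    · exact absurd rfl hn
  · intro h x hxT
    by_cases hxg : x = g
    · exact Or.inr (Or.inl ⟨hxg, hn⟩)
    · exact Or.inl (h x ⟨hxT, hxg⟩)

lemma intent_op_m (I : G → M → Prop) {g : G} {m : M} (hg : ¬ I g m) (T : Set G) :
    m ∈ intentOf (opRel I g m) T ↔ g ∉ T := by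
  simp only [intentOf, opRel, Set.mem_setOf_eq]
  constructor
  · intro h hgT
    rcases h g hgT with h1 | ⟨_, h2⟩ | ⟨h2, _⟩
    · exact hg h1
    · exact h2 rfl
    · exact h2 rfl
  · intro hgT x hxT
    exact Or.inr (Or.inr ⟨fun hxg => hgT (hxg ▸ hxT), trivial⟩)

lemma mem_cl_op_ne (I : G → M → Prop) {g h : G} {m : M} (hh : h ≠ g) (T : Set G) :
    h ∈ cl (opRel I g m) T ↔ h ∈ clm I m (T \ {g}) := by
  constructor
  · intro H n hn hnm
    rcases H n ((intent_op_ne I hnm T).mpr hn) with h1 | ⟨rfl, _⟩ | ⟨_, rfl⟩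
    · exact h1
    · exact absurd rfl hh
    · exact absurd rfl hnm
  · intro H n hn
    by_cases hnm : n = m
    · exact Or.inr (Or.inr ⟨hh, hnm⟩)
    · exact Or.inl (H n ((intent_op_ne I hnm T).mp hn) hnm)

lemma mem_cl_op_self (I : G → M → Prop) {g : G} {m : M} (hg : ¬ I g m) (T : Set G) :
    g ∈ cl (opRel I g m) T ↔ g ∈ T := by
  constructor
  · intro H
    by_contra hgT
    rcases H m ((intent_op_m I hg T).mpr hgT) with h1 | ⟨_, h2⟩ | ⟨h2, _⟩
    · exact hg h1
    · exact h2 rfl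
    · exact h2 rfl
  · intro hgT
    exact subset_cl _ T hgT

lemma intent_op_eq_iff_mem (I : G → M → Prop) {g : G} {m : M} (hg : ¬ I g m)
    {S : Set G} (hgS : g ∈ S) :
    intentOf (opRel I g m) S = intentOf I S ↔ g ∈ clm I m (S \ {g}) := by
  constructor
  · intro hQ n hn hnm
    have h1 : n ∈ intentOf (opRel I g m) S := (intent_op_ne I hnm S).mpr hn
    rw [hQ] at h1
    exact h1 g hgS
  · intro hQ
    ext n
    by_cases hnm : n = m
    · subst hnm
      rw [intent_op_m I hg S]
      exact iff_of_false (fun h => h hgS) (fun h => hg (h g hgS))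
    · rw [intent_op_ne I hnm S]
      constructor
      · intro hn x hxS
        by_cases hxg : x = g
        · exact hxg ▸ hQ n hn hnm
        · exact hn x ⟨hxS, hxg⟩
      · intro hn
        exact intent_anti I Set.diff_subset hn

lemma intent_op_eq_iff_notmem (I : G → M → Prop) {g : G} {m : M} (hg : ¬ I g m)
    {S : Set G} (hgS : g ∉ S) :
    intentOf (opRel I g m) S = intentOf I S ↔ m ∈ intentOf I S := by
  constructor
  · intro hQ
    rw [← hQ]
    exact (intent_op_m I hg S).mpr hgS
  · intro hm
    ext n
    by_cases hnm : n = m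
    · subst hnm
      rw [intent_op_m I hg S]
      exact iff_of_true hgS hm
    · rw [intent_op_ne I hnm S, Set.diff_singleton_eq_self hgS]

lemma chi_anti (I : G → M → Prop) (m : M) {S T : Set G} (hTS : T ⊆ S) :
    chi I m S ⊆ chi I m T := by
  rintro h ⟨hhm, n, hn, hIn, hnm⟩
  exact ⟨hhm, n, intent_anti I hTS hn, hIn, hnm⟩

lemma mem_chi_iff (I : G → M → Prop) {m : M} {S : Set G} {h : G} (hh : ¬ I h m) :
    h ∈ chi I m S ↔ h ∉ clm I m S := by
  constructor
  · rintro ⟨-, n, hn, hIn, hnm⟩ hcl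
    exact hIn (hcl n hn hnm)
  · intro hcl
    refine ⟨hh, ?_⟩
    by_contra hSA
    refine hcl (fun n hn hnm => ?_)
    by_contra hIn
    exact hSA ⟨n, hn, hIn, hnm⟩

lemma not_mem_chi_self (I : G → M → Prop) {m : M} {S : Set G} {h : G} (hh : h ∈ S) :
    h ∉ chi I m S := by
  rintro ⟨-, n, hn, hIn, -⟩
  exact hIn (hn h hh)

lemma chi_diff_subset (I : G → M → Prop) {m : M} {S : Set G} {x : G}
    (hR : ∀ y ∈ S, ¬ I y m → y = x)
    (hcl : x ∈ clm I m (S \ {h : G | ¬ I h m})) :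
    chi I m (S \ {h : G | ¬ I h m}) ⊆ chi I m S := by
  rintro h ⟨hhm, n, hn, hIn, hnm⟩
  refine ⟨hhm, n, ?_, hIn, hnm⟩
  intro y hyS
  by_cases hy : I y m
  · exact hn y ⟨hyS, fun hc => hc hy⟩
  · exact (hR y hyS hy) ▸ hcl n hn hnm

lemma mixgen_op_of_mem (I : G → M → Prop) {g : G} {m : M} (hg : ¬ I g m)
    {S : Set G} (hgS : g ∈ S) (hK : MixGen I {h : G | ¬ I h m} S) :
    MixGen (opRel I g m) {h : G | ¬ I h m} S := by
  rw [mixgen_iff] at hK ⊢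
  obtain ⟨hK1, hK2⟩ := hK
  constructor
  · rintro x ⟨hxS, hxR⟩ hcl
    by_cases hxg : x = g
    · subst hxg
      rw [mem_cl_op_self I hg] at hcl
      exact hcl.2 rfl
    · rw [mem_cl_op_ne I hxg] at hcl
      have h1 : x ∈ clm I m (S \ {x}) := clm_mono I m Set.diff_subset hcl
      have h2 : clm I m (S \ {x}) = cl I (S \ {x}) :=
        clm_eq_cl I m (x := g) ⟨hgS, fun hc => hxg (hc.symm)⟩ hg
      exact hK1 x ⟨hxS, hxR⟩ (h2 ▸ h1)
  · intro x hx hcl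
    have hxg : x ≠ g := fun h => hx (Or.inl (h ▸ hgS))
    rw [mem_cl_op_ne I hxg] at hcl
    have hxm : I x m := not_not.mp (fun h => hx (Or.inr h))
    have h1 : x ∈ cl I (S \ {g}) := mem_cl_of_mem_clm I m hxm hcl
    exact hK2 x hx (cl_mono I Set.diff_subset h1)

end Aux

theorem statement16 {G M : Type*} (I : G → M → Prop) (m : M) (g : G)
    (hg : ¬ I g m) (S : Set G)
    (hK : MixGen I {h : G | ¬ I h m} S) :
    (chi I m S = chi I m (S \ {h : G | ¬ I h m}) ↔
      (¬ MixGen (opRel I g m) {h : G | ¬ I h m} S ∨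
        (MixGen (opRel I g m) {h : G | ¬ I h m} S ∧
          intentOf (opRel I g m) S = intentOf I S))) ∧
    (chi I m S ⊂ chi I m (S \ {h : G | ¬ I h m}) ↔
      (MixGen (opRel I g m) {h : G | ¬ I h m} S ∧
        intentOf (opRel I g m) S ≠ intentOf I S)) ∧
    (({h : G | ¬ I h m} ⊆ S ∧ MixGen (opRel I g m) {h : G | ¬ I h m} S ∧
        intentOf (opRel I g m) S ≠ intentOf I S ∧
        intentOf (opRel I g m) (S ∪ {g}) ≠ intentOf I S) →
      ∀ h : G, ¬ I h m →
        MixGen (opRel I h m) {h' : G | ¬ I h' m} S ∧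
        intentOf (opRel I h m) S ≠ intentOf I S ∧
        intentOf (opRel I h m) (S ∪ {h}) ≠ intentOf I S) := by
  have hKiff := (mixgen_iff I {h : G | ¬ I h m} S).mp hK
  have hsub : chi I m S ⊆ chi I m (S \ {h : G | ¬ I h m}) :=
    chi_anti I m Set.diff_subset
  -- KEY equivalence
  have key : (chi I m S ≠ chi I m (S \ {h : G | ¬ I h m})) ↔
      (MixGen (opRel I g m) {h : G | ¬ I h m} S ∧
        intentOf (opRel I g m) S ≠ intentOf I S) := by
    by_cases hgS : g ∈ S
    · -- case g ∈ S : MixGen of op holds automatically; ne ↔ ¬Q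
      have hP := mixgen_op_of_mem I hg hgS hK
      have hQiff := intent_op_eq_iff_mem I hg hgS
      constructor
      · intro hne
        refine ⟨hP, fun hQ => hne ?_⟩
        have hQ' : g ∈ clm I m (S \ {g}) := hQiff.mp hQ
        -- S ∩ R ⊆ {g}
        have hRg : ∀ y ∈ S, ¬ I y m → y = g := by
          intro y hyS hym
          by_contra hyg
          have hcleq : clm I m (S \ {g}) = cl I (S \ {g}) :=
            clm_eq_cl I m (x := y) ⟨hyS, fun hc => hyg hc⟩ hym
          exact hKiff.1 g ⟨hgS, hg⟩ (hcleq ▸ hQ')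
        -- S \ R = S \ {g}
        have hSR : S \ {h : G | ¬ I h m} = S \ {g} := by
          ext y
          constructor
          · rintro ⟨hyS, hyR⟩
            exact ⟨hyS, fun hc => hyR (hc ▸ hg)⟩
          · rintro ⟨hyS, hyg⟩
            exact ⟨hyS, fun hyR => hyg (hRg y hyS hyR)⟩
        refine subset_antisymm hsub (chi_diff_subset I hRg ?_)
        rw [hSR]
        exact hQ'
      · rintro ⟨-, hQne⟩
        have hQ' : g ∉ clm I m (S \ {g}) := fun h => hQne (hQiff.mpr h)
        have hsub2 : S \ {h : G | ¬ I h m} ⊆ S \ {g} := by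
          rintro y ⟨hyS, hyR⟩
          exact ⟨hyS, fun hc => hyR (hc ▸ hg)⟩
        have h1 : g ∉ clm I m (S \ {h : G | ¬ I h m}) :=
          fun h => hQ' (clm_mono I m hsub2 h)
        have h2 : g ∈ chi I m (S \ {h : G | ¬ I h m}) := (mem_chi_iff I hg).mpr h1
        intro heq
        exact not_mem_chi_self I hgS (heq ▸ h2)
    · -- case g ∉ S
      by_cases hex : ∃ s ∈ S, ¬ I s m
      · obtain ⟨s, hsS, hsm⟩ := hex
        have hQne : intentOf (opRel I g m) S ≠ intentOf I S :=
          fun e => hsm (((intent_op_eq_iff_notmem I hg hgS).mp e) s hsS)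
        constructor
        · intro hne
          refine ⟨?_, hQne⟩
          rw [mixgen_iff]
          constructor
          · rintro x ⟨hxS, hxR⟩ hcl
            have hxg : x ≠ g := fun h => hgS (h ▸ hxS)
            rw [mem_cl_op_ne I hxg,
              Set.diff_singleton_eq_self (fun hc : g ∈ S \ {x} => hgS hc.1)] at hcl
            -- hcl : x ∈ clm I m (S \ {x})
            by_cases hex2 : ∃ y, y ∈ S ∧ ¬ I y m ∧ y ≠ x
            · obtain ⟨y, hyS, hym, hyx⟩ := hex2
              have hcleq : clm I m (S \ {x}) = cl I (S \ {x}) :=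
                clm_eq_cl I m (x := y) ⟨hyS, hyx⟩ hym
              exact hKiff.1 x ⟨hxS, hxR⟩ (hcleq ▸ hcl)
            · push_neg at hex2
              have hRx : ∀ y ∈ S, ¬ I y m → y = x := fun y hyS hym => hex2 y hyS hym
              have hSR : S \ {h : G | ¬ I h m} = S \ {x} := by
                ext y
                constructor
                · rintro ⟨hyS, hyR⟩
                  exact ⟨hyS, fun hc => hyR (hc ▸ hxR)⟩
                · rintro ⟨hyS, hyx⟩
                  exact ⟨hyS, fun hyR => hyx (hRx y hyS hyR)⟩
              refine hne (subset_antisymm hsub (chi_diff_subset I hRx ?_))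
              rw [hSR]
              exact hcl
          · intro x hx hcl
            have hxg : x ≠ g := fun h => hx (Or.inr (h ▸ hg))
            rw [mem_cl_op_ne I hxg, Set.diff_singleton_eq_self hgS] at hcl
            have hxm : I x m := not_not.mp (fun h => hx (Or.inr h))
            exact hKiff.2 x hx (mem_cl_of_mem_clm I m hxm hcl)
        · rintro ⟨hP, -⟩
          rw [mixgen_iff] at hP
          have hsg : s ≠ g := fun h => hgS (h ▸ hsS)
          have h1 : s ∉ cl (opRel I g m) (S \ {s}) := hP.1 s ⟨hsS, hsm⟩
          rw [mem_cl_op_ne I hsg,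
            Set.diff_singleton_eq_self (fun hc : g ∈ S \ {s} => hgS hc.1)] at h1
          have hsub2 : S \ {h : G | ¬ I h m} ⊆ S \ {s} := by
            rintro y ⟨hyS, hyR⟩
            exact ⟨hyS, fun hc => hyR (hc ▸ hsm)⟩
          have h2 : s ∉ clm I m (S \ {h : G | ¬ I h m}) :=
            fun h => h1 (clm_mono I m hsub2 h)
          have h3 : s ∈ chi I m (S \ {h : G | ¬ I h m}) := (mem_chi_iff I hsm).mpr h2
          intro heq
          exact not_mem_chi_self I hsS (heq ▸ h3)
      · -- S ∩ R = ∅ : both sides false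
        push_neg at hex
        have hQ : intentOf (opRel I g m) S = intentOf I S := by
          rw [intent_op_eq_iff_notmem I hg hgS]
          exact fun x hx => hex x hx
        have hSR : S \ {h : G | ¬ I h m} = S := by
          ext y
          constructor
          · exact fun h => h.1
          · intro hy
            exact ⟨hy, fun hc => hc (hex y hy)⟩
        constructor
        · intro hne
          exact absurd (by rw [hSR]) hne
        · rintro ⟨-, hQne⟩
          exact absurd hQ hQne
  refine ⟨?_, ?_, ?_⟩
  · -- part 1
    constructor
    · intro heq
      by_cases hP : MixGen (opRel I g m) {h : G | ¬ I h m} S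
      · refine Or.inr ⟨hP, ?_⟩
        by_contra hQne
        exact key.mpr ⟨hP, hQne⟩ heq
      · exact Or.inl hP
    · rintro (hP | ⟨hP, hQ⟩)
      · by_contra hne
        exact hP (key.mp hne).1
      · by_contra hne
        exact (key.mp hne).2 hQ
  · -- part 2
    rw [ssubset_iff_subset_ne]
    constructor
    · rintro ⟨-, hne⟩
      exact key.mp hne
    · intro h
      exact ⟨hsub, key.mpr h⟩
  · -- part 3
    rintro ⟨hRS, hPg, hQg, -⟩ h hhm
    have hhS : h ∈ S := hRS hhm
    have hgS : g ∈ S := hRS hg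
    have key2 : h ∉ clm I m (S \ {h}) := by
      intro hclm
      by_cases hgh : g = h
      · subst hgh
        exact hQg ((intent_op_eq_iff_mem I hg hgS).mpr hclm)
      · have hcleq : clm I m (S \ {h}) = cl I (S \ {h}) :=
          clm_eq_cl I m (x := g) ⟨hgS, hgh⟩ hg
        exact hKiff.1 h ⟨hhS, hhm⟩ (hcleq ▸ hclm)
    have hQh : intentOf (opRel I h m) S ≠ intentOf I S :=
      fun e => key2 ((intent_op_eq_iff_mem I hhm hhS).mp e)
    refine ⟨mixgen_op_of_mem I hhm hhS hK, hQh, ?_⟩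
    have hUn : S ∪ {h} = S := Set.union_eq_left.mpr (Set.singleton_subset_iff.mpr hhS)
    rw [hUn]
    exact hQh
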